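/- arXiv:1907.01995 — 2 statements merged into one kernel-verified Lean document; each statement's English description precedes it below -/
import Mathlib

section
/- Suppose Assumption 1 holds. Let (σ_k)_{k≥0} be independent and uniformly distributed on Γ, let z^0 ∈ ℝ^{n+m} be deterministic, and define the RAC-MBADMM iterates by z^{k+1} = M_{σ_k} z^k + L̄_{σ_k}^{-1} b̄. If the spectral radius of |Γ|^{-1} Σ_{σ∈Γ} (M_σ ⊗ M_σ), where ⊗ denotes the Kronecker product of matrices, is strictly less than 1, then the iterates z^k converge almost surely to a KKT point (x*, y*) of the linearly constrained quadratic problem, i.e., Hx* + c − Aᵀy* = 0 and Ax* = b. -/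
open Matrix Filter Topology MeasureTheory ProbabilityTheory Kronecker

namespace RAC

noncomputable section

/-- `S = H + β AᵀA`. -/
def Smat {n m : ℕ} (H : Matrix (Fin n) (Fin n) ℝ) (A : Matrix (Fin m) (Fin n) ℝ)
    (β : ℝ) : Matrix (Fin n) (Fin n) ℝ :=
  H + β • (Aᵀ * A)

/-- An update order, encoded by assigning to each variable index its block;
all `p` fibers (blocks) have size `s`. -/
def IsUpdateOrder (n p s : ℕ) (σ : Fin n → Fin p) : Prop :=
  ∀ i : Fin p, (Finset.univ.filter fun a => σ a = i).card = s

instance (n p s : ℕ) : DecidablePred (IsUpdateOrder n p s) := fun _ => by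
  unfold IsUpdateOrder; infer_instance

/-- The set `Γ` of all update orders. -/
abbrev UpdateOrder (n p s : ℕ) := {σ : Fin n → Fin p // IsUpdateOrder n p s σ}

/-- The block lower-triangular matrix `L_σ`. -/
def Lmat {n m p : ℕ} (H : Matrix (Fin n) (Fin n) ℝ) (A : Matrix (Fin m) (Fin n) ℝ)
    (β : ℝ) (σ : Fin n → Fin p) : Matrix (Fin n) (Fin n) ℝ :=
  Matrix.of fun a b => if σ b ≤ σ a then Smat H A β a b else 0

/-- Assumption 1: every size-`s` principal submatrix of `H + β AᵀA` is positive definite. -/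
def Assumption1 {n m : ℕ} (H : Matrix (Fin n) (Fin n) ℝ) (A : Matrix (Fin m) (Fin n) ℝ)
    (β : ℝ) (s : ℕ) : Prop :=
  ∀ τ : Finset (Fin n), τ.card = s →
    ((Smat H A β).submatrix (fun x : τ => (x : Fin n)) (fun x : τ => (x : Fin n))).PosDef

/-- `L̄_σ = [[L_σ, 0], [βA, I]]`. -/
def Lbar {n m p : ℕ} (H : Matrix (Fin n) (Fin n) ℝ) (A : Matrix (Fin m) (Fin n) ℝ)
    (β : ℝ) (σ : Fin n → Fin p) : Matrix (Fin n ⊕ Fin m) (Fin n ⊕ Fin m) ℝ :=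
  Matrix.fromBlocks (Lmat H A β σ) 0 (β • A) 1

/-- `R̄_σ = [[L_σ − S, Aᵀ], [0, I]]`. -/
def Rbar {n m p : ℕ} (H : Matrix (Fin n) (Fin n) ℝ) (A : Matrix (Fin m) (Fin n) ℝ)
    (β : ℝ) (σ : Fin n → Fin p) : Matrix (Fin n ⊕ Fin m) (Fin n ⊕ Fin m) ℝ :=
  Matrix.fromBlocks (Lmat H A β σ - Smat H A β) Aᵀ 0 1

/-- `b̄ = (−c + β Aᵀb ; β b)`. -/
def bbar {n m : ℕ} (c : Fin n → ℝ) (A : Matrix (Fin m) (Fin n) ℝ) (b : Fin m → ℝ)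
    (β : ℝ) : Fin n ⊕ Fin m → ℝ :=
  Sum.elim (-c + β • (Aᵀ *ᵥ b)) (β • b)

/-- The per-iteration mapping matrix `M_σ = L̄_σ⁻¹ R̄_σ`. -/
def Mmat {n m p : ℕ} (H : Matrix (Fin n) (Fin n) ℝ) (A : Matrix (Fin m) (Fin n) ℝ)
    (β : ℝ) (σ : Fin n → Fin p) : Matrix (Fin n ⊕ Fin m) (Fin n ⊕ Fin m) ℝ :=
  (Lbar H A β σ)⁻¹ * Rbar H A β σ

/-- `Q = |Γ|⁻¹ Σ_{σ∈Γ} L_σ⁻¹`. -/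
def Qmat (n m p s : ℕ) (H : Matrix (Fin n) (Fin n) ℝ) (A : Matrix (Fin m) (Fin n) ℝ)
    (β : ℝ) : Matrix (Fin n) (Fin n) ℝ :=
  (Fintype.card (UpdateOrder n p s) : ℝ)⁻¹ •
    ∑ σ : UpdateOrder n p s, (Lmat H A β σ.1)⁻¹

/-- The expected mapping matrix `M`. -/
def Mexp (n m p s : ℕ) (H : Matrix (Fin n) (Fin n) ℝ) (A : Matrix (Fin m) (Fin n) ℝ)
    (β : ℝ) : Matrix (Fin n ⊕ Fin m) (Fin n ⊕ Fin m) ℝ :=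
  Matrix.fromBlocks (1 - Qmat n m p s H A β * Smat H A β) (Qmat n m p s H A β * Aᵀ)
    (-(β • A) + β • (A * (Qmat n m p s H A β * Smat H A β)))
    (1 - β • (A * (Qmat n m p s H A β * Aᵀ)))

/-- KKT point of `min ½xᵀHx + cᵀx  s.t.  Ax = b`. -/
def IsKKT {n m : ℕ} (H : Matrix (Fin n) (Fin n) ℝ) (c : Fin n → ℝ)
    (A : Matrix (Fin m) (Fin n) ℝ) (b : Fin m → ℝ) (x : Fin n → ℝ) (y : Fin m → ℝ) :
    Prop :=
  H *ᵥ x + c - Aᵀ *ᵥ y = 0 ∧ A *ᵥ x = b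

/-- `μ` is an eigenvalue of the complex matrix `M`. -/
def HasEigen {ι : Type*} [Fintype ι] (M : Matrix ι ι ℂ) (μ : ℂ) : Prop :=
  ∃ v : ι → ℂ, v ≠ 0 ∧ M *ᵥ v = μ • v

/-- `μ` is a (real) eigenvalue of the real matrix `M`. -/
def HasEigenR {ι : Type*} [Fintype ι] (M : Matrix ι ι ℝ) (μ : ℝ) : Prop :=
  ∃ v : ι → ℝ, v ≠ 0 ∧ M *ᵥ v = μ • v

end

end RAC

open RAC Matrix Filter Topology MeasureTheory ProbabilityTheory Kronecker
open scoped ENNReal NNReal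

/-!
`K = L̄_σ - R̄_σ = [[S, -Aᵀ], [βA, 0]]` does not depend on `σ`, so every affine map
`z ↦ M_σ z + L̄_σ⁻¹ b̄` fixes the solution `z⋆` of `K z⋆ = b̄`, which is a KKT point; the error
`e_k = z_k - z⋆` then obeys `e_{k+1} = M_{σ_k} e_k`. `K` is invertible: a kernel vector `v` would be
fixed by every `M_σ`, making `v ⊗ v` an eigenvector of `T = |Γ|⁻¹ Σ_σ M_σ ⊗ M_σ` for the
eigenvalue `1`. Averaging over the independent uniform draws gives `E[e_k ⊗ e_k] = T^k (e_0 ⊗ e_0)`,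
and by Gelfand's formula `‖T^k‖` is summable. Markov's inequality makes `Σ_k P(‖e_k‖ ≥ ε)` finite,
and Borel–Cantelli yields `e_k → 0` almost surely.
-/

namespace RAC

section OrderedProduct

variable {Γ R ι : Type*}

/-- `orderedProd f k g = f (g (k-1)) * ⋯ * f (g 0)`. -/
def orderedProd [Monoid R] (f : Γ → R) : (k : ℕ) → (Fin k → Γ) → R
  | 0, _ => 1
  | k + 1, g => f (g (Fin.last k)) * orderedProd f k (Fin.init g)

theorem sum_orderedProd [Semiring R] [Fintype Γ] (f : Γ → R) (k : ℕ) :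
    ∑ g : Fin k → Γ, orderedProd f k g = (∑ a, f a) ^ k := by
  induction k with
  | zero => simp [orderedProd]
  | succ k ih =>
    have hinit (a : Γ) (h : Fin k → Γ) : Fin.init ((Fin.snocEquiv fun _ => Γ) (a, h)) = h :=
      Fin.init_snoc _ _
    rw [← (Fin.snocEquiv fun _ => Γ).sum_comp, Fintype.sum_prod_type, pow_succ', ← ih,
      Finset.sum_mul_sum]
    simp [orderedProd, hinit]

theorem orderedProd_kronecker [CommSemiring R] [Fintype ι] [DecidableEq ι]
    (M : Γ → Matrix ι ι R) (k : ℕ) (g : Fin k → Γ) :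
    orderedProd (fun a => M a ⊗ₖ M a) k g = orderedProd M k g ⊗ₖ orderedProd M k g := by
  induction k with
  | zero => exact one_kronecker_one.symm
  | succ k ih => rw [orderedProd, orderedProd, ih, mul_kronecker_mul]

theorem orderedProd_mulVec_of_succ [CommSemiring R] [Fintype ι] [DecidableEq ι]
    (M : Γ → Matrix ι ι R) (g : ℕ → Γ) {y : ℕ → ι → R} (hy : ∀ k, y (k + 1) = M (g k) *ᵥ y k)
    (k : ℕ) :
    y k = orderedProd M k (fun j => g j) *ᵥ y 0 := by
  induction k with
  | zero => simp [orderedProd]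
  | succ k ih => rw [hy, ih, orderedProd, mulVec_mulVec]; rfl

end OrderedProduct

section KroneckerMean

variable {Γ ι κ R : Type*}

def kronVec [Mul R] (u : ι → R) (v : κ → R) : ι × κ → R := fun q => u q.1 * v q.2

theorem kronecker_mulVec_kronVec [CommSemiring R] [Fintype ι] (M N : Matrix ι ι R)
    (u v : ι → R) : (M ⊗ₖ N) *ᵥ kronVec u v = kronVec (M *ᵥ u) (N *ᵥ v) := by
  funext q
  simp only [kronVec, mulVec, dotProduct, kroneckerMap_apply, Fintype.sum_prod_type,
    Finset.sum_mul_sum]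
  exact Finset.sum_congr rfl fun _ _ => Finset.sum_congr rfl fun _ _ => by ring

/-- For uniform `a`, `E[(M a e) ⊗ (M a e)] = kronMean M (e ⊗ e)`. -/
noncomputable def kronMean [Fintype Γ] (M : Γ → Matrix ι ι ℝ) : Matrix (ι × ι) (ι × ι) ℝ :=
  (Fintype.card Γ : ℝ)⁻¹ • ∑ a, M a ⊗ₖ M a

variable [Fintype Γ] [Fintype ι]

theorem kronMean_mulVec_kronVec_of_forall_mulVec_eq [Nonempty Γ] {M : Γ → Matrix ι ι ℝ}
    {v : ι → ℝ} (hv : ∀ a, M a *ᵥ v = v) : kronMean M *ᵥ kronVec v v = kronVec v v := by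
  simp only [kronMean, smul_mulVec, sum_mulVec, kronecker_mulVec_kronVec, hv,
    Finset.sum_const, Finset.card_univ, ← Nat.cast_smul_eq_nsmul ℝ, smul_smul]
  rw [inv_mul_cancel₀ (by exact_mod_cast Fintype.card_ne_zero), one_smul]

theorem sum_sq_orderedProd_mulVec [DecidableEq ι] [Nonempty Γ] (M : Γ → Matrix ι ι ℝ) (k : ℕ)
    (v : ι → ℝ) (i : ι) : ∑ g : Fin k → Γ, (orderedProd M k g *ᵥ v) i ^ 2 =
      Fintype.card Γ ^ k * (kronMean M ^ k *ᵥ kronVec v v) (i, i) := by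
  have hsum : (Fintype.card Γ : ℝ) ^ k • kronMean M ^ k =
      ∑ g : Fin k → Γ, orderedProd M k g ⊗ₖ orderedProd M k g := by
    rw [← smul_pow, kronMean, smul_smul,
      mul_inv_cancel₀ (by exact_mod_cast Fintype.card_ne_zero), one_smul, ← sum_orderedProd]
    simp only [orderedProd_kronecker]
  rw [← smul_eq_mul, ← Pi.smul_apply, ← smul_mulVec, hsum, sum_mulVec, Finset.sum_apply]
  simp only [kronecker_mulVec_kronVec, kronVec, sq]

end KroneckerMean

theorem inv_mul_mulVec_add_inv_mulVec_eq_self {ι R : Type*} [Fintype ι] [DecidableEq ι]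
    [CommRing R] {L N : Matrix ι ι R} (hL : IsUnit L.det) {z b : ι → R} (h : (L - N) *ᵥ z = b) :
    (L⁻¹ * N) *ᵥ z + L⁻¹ *ᵥ b = z := by
  rw [← h, ← mulVec_mulVec, ← mulVec_add, sub_mulVec, add_sub_cancel, mulVec_mulVec,
    nonsing_inv_mul _ hL, one_mulVec]

section SpectralRadius

theorem summable_norm_pow_of_spectralRadius_lt_one {𝔸 : Type*} [NormedRing 𝔸]
    [NormedAlgebra ℂ 𝔸] [CompleteSpace 𝔸] {a : 𝔸} (ha : spectralRadius ℂ a < 1) :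
    Summable fun k => ‖a ^ k‖ := by
  obtain ⟨r, hρr, hr⟩ := ENNReal.lt_iff_exists_nnreal_btwn.1 ha
  have hr1 : r < 1 := by exact_mod_cast hr
  have hgelfand := spectrum.pow_nnnorm_pow_one_div_tendsto_nhds_spectralRadius a
  have hev : ∀ᶠ k : ℕ in atTop, ‖a ^ k‖ ≤ r ^ k := by
    filter_upwards [hgelfand.eventually_lt_const hρr, eventually_ge_atTop 1] with k hk hk1
    have hk0 : (k : ℝ) ≠ 0 := by positivity
    have := ENNReal.rpow_le_rpow hk.le (Nat.cast_nonneg k)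
    rw [← ENNReal.rpow_mul, one_div_mul_cancel hk0, ENNReal.rpow_one, ENNReal.rpow_natCast,
      ← ENNReal.coe_pow, ENNReal.coe_le_coe] at this
    exact_mod_cast this
  exact (summable_geometric_of_lt_one r.coe_nonneg hr1).of_norm_bounded_eventually_nat
    (by simpa using hev)

variable {ι : Type*} [Fintype ι] [DecidableEq ι]

attribute [local instance] Matrix.linftyOpNormedRing Matrix.linftyOpNormedAlgebra

theorem spectralRadius_lt_one_of_hasEigen {T : Matrix ι ι ℂ}
    (hT : ∀ lam, HasEigen T lam → ‖lam‖ < 1) : spectralRadius ℂ T < 1 := by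
  rcases (spectrum ℂ T).eq_empty_or_nonempty with hempty | hne
  · simp [spectralRadius, hempty]
  refine spectrum.spectralRadius_lt_of_forall_lt_of_nonempty hne fun lam hlam => ?_
  rw [← spectrum_toLin', ← Module.End.hasEigenvalue_iff_mem_spectrum] at hlam
  obtain ⟨v, hv⟩ := hlam.exists_hasEigenvector
  have := hT lam ⟨v, hv.2, by simpa using hv.apply_eq_smul⟩
  exact_mod_cast this

theorem summable_norm_pow_mulVec {T : Matrix ι ι ℝ}
    (hT : ∀ lam, HasEigen (T.map Complex.ofReal) lam → ‖lam‖ < 1) (v : ι → ℝ) :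
    Summable fun k => ‖T ^ k *ᵥ v‖ := by
  let Tℂ := T.map Complex.ofReal
  let vℂ : ι → ℂ := Complex.ofReal ∘ v
  have hbound (k : ℕ) : ‖T ^ k *ᵥ v‖ ≤ ‖Tℂ ^ k‖ * ‖vℂ‖ := by
    have hpow : Tℂ ^ k = (T ^ k).map Complex.ofReal :=
      (map_pow Complex.ofRealHom.mapMatrix T k).symm
    refine (pi_norm_le_iff_of_nonneg (mul_nonneg (norm_nonneg _) (norm_nonneg _))).2 fun i => ?_
    calc ‖(T ^ k *ᵥ v) i‖ = ‖(Tℂ ^ k *ᵥ vℂ) i‖ := by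
          rw [hpow, ← Complex.norm_real]
          exact congrArg norm (RingHom.map_mulVec Complex.ofRealHom (T ^ k) v i)
      _ ≤ ‖Tℂ ^ k *ᵥ vℂ‖ := norm_le_pi_norm _ i
      _ ≤ ‖Tℂ ^ k‖ * ‖vℂ‖ := linfty_opNorm_mulVec _ _
  have hρ : spectralRadius ℂ Tℂ < 1 := spectralRadius_lt_one_of_hasEigen hT
  have hs : Summable fun k => ‖Tℂ ^ k‖ := summable_norm_pow_of_spectralRadius_lt_one hρ
  exact (hs.mul_right ‖vℂ‖).of_nonneg_of_le (fun _ => norm_nonneg _) hbound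

end SpectralRadius

section UniformIndependent

variable {Ω Γ : Type*} [MeasurableSpace Ω] {μ : Measure Ω} [Fintype Γ] [MeasurableSpace Γ]
  [MeasurableSingletonClass Γ] {σ : ℕ → Ω → Γ}

theorem measure_prefix_eq (hindep : iIndepFun σ μ)
    (hunif : ∀ k g, μ {ω | σ k ω = g} = (Fintype.card Γ : ℝ≥0∞)⁻¹) (k : ℕ) (g : Fin k → Γ) :
    μ {ω | ∀ j : Fin k, σ j ω = g j} = (Fintype.card Γ : ℝ≥0∞)⁻¹ ^ k := by
  have := (hindep.precomp Fin.val_injective).measure_inter_preimage_eq_mul Finset.univ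
    (sets := fun j => {g j}) fun _ _ => measurableSet_singleton _
  simp only [Finset.mem_univ, Set.iInter_true, Set.preimage, Set.mem_singleton_iff] at this
  rw [Set.ofPred_forall, this]
  simp [hunif]

theorem measure_prefix_mem_le (hindep : iIndepFun σ μ)
    (hunif : ∀ k g, μ {ω | σ k ω = g} = (Fintype.card Γ : ℝ≥0∞)⁻¹) {k : ℕ}
    (B : Finset (Fin k → Γ)) :
    μ {ω | (fun j : Fin k => σ j ω) ∈ B} ≤ B.card * (Fintype.card Γ : ℝ≥0∞)⁻¹ ^ k :=
  calc μ {ω | (fun j : Fin k => σ j ω) ∈ B}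
      ≤ μ (⋃ g ∈ B, {ω | ∀ j : Fin k, σ j ω = g j}) :=
        measure_mono fun ω hω => Set.mem_biUnion hω fun _ => rfl
    _ ≤ ∑ g ∈ B, μ {ω | ∀ j : Fin k, σ j ω = g j} := measure_biUnion_finset_le _ _
    _ = B.card * (Fintype.card Γ : ℝ≥0∞)⁻¹ ^ k := by
        simp [measure_prefix_eq hindep hunif]

theorem measure_le_apply_prefix_le [Nonempty Γ] (hindep : iIndepFun σ μ)
    (hunif : ∀ k g, μ {ω | σ k ω = g} = (Fintype.card Γ : ℝ≥0∞)⁻¹) {k : ℕ}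
    {V : (Fin k → Γ) → ℝ} (hV : ∀ g, 0 ≤ V g) {ε : ℝ} (hε : 0 < ε) :
    μ {ω | ε ≤ V fun j => σ j ω} ≤
      ENNReal.ofReal ((∑ g, V g) / (ε * Fintype.card Γ ^ k)) := by
  classical
  set B := Finset.univ.filter fun g => ε ≤ V g
  have hcard : B.card * ε ≤ ∑ g, V g :=
    calc B.card * ε = ∑ _g ∈ B, ε := by simp
      _ ≤ ∑ g ∈ B, V g := Finset.sum_le_sum fun g hg => (Finset.mem_filter.1 hg).2
      _ ≤ ∑ g, V g := Finset.sum_le_sum_of_subset_of_nonneg (Finset.subset_univ _)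
          fun g _ _ => hV g
  calc μ {ω | ε ≤ V fun j => σ j ω} = μ {ω | (fun j : Fin k => σ j ω) ∈ B} := by simp [B]
    _ ≤ B.card * (Fintype.card Γ : ℝ≥0∞)⁻¹ ^ k := measure_prefix_mem_le hindep hunif B
    _ = ENNReal.ofReal (B.card * ε / (ε * Fintype.card Γ ^ k)) := by
        rw [mul_comm ε, mul_div_mul_right _ _ hε.ne', ENNReal.ofReal_div_of_pos (by positivity),
          div_eq_mul_inv, ENNReal.ofReal_pow (by positivity), ENNReal.inv_pow]
        simp
    _ ≤ _ := by gcongr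

end UniformIndependent

theorem ae_tendsto_of_forall_tsum_measure_le_dist_ne_top {α E : Type*} [MeasurableSpace α]
    [PseudoMetricSpace E] {μ : Measure α} {f : ℕ → α → E} {a : E}
    (h : ∀ ε > 0, ∑' k, μ {x | ε ≤ dist (f k x) a} ≠ ∞) :
    ∀ᵐ x ∂μ, Tendsto (fun k => f k x) atTop (𝓝 a) := by
  have hj : ∀ᵐ x ∂μ, ∀ j : ℕ, ∀ᶠ k in atTop, dist (f k x) a < 1 / ((j : ℝ) + 1) :=
    ae_all_iff.2 fun j => (ae_eventually_notMem (h _ Nat.one_div_pos_of_nat)).mono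
      fun x hx => hx.mono fun k hk => not_le.1 hk
  filter_upwards [hj] with x hx
  refine Metric.tendsto_atTop.2 fun ε hε => ?_
  obtain ⟨j, hjε⟩ := exists_nat_one_div_lt hε
  exact ((hx j).exists_forall_of_atTop).imp fun N hN k hk => (hN k hk).trans hjε

theorem sq_norm_le_sum_sq {ι : Type*} [Fintype ι] (u : ι → ℝ) : ‖u‖ ^ 2 ≤ ∑ i, u i ^ 2 := by
  have hsum : 0 ≤ ∑ i, u i ^ 2 := Finset.sum_nonneg fun i _ => sq_nonneg _
  have : ‖u‖ ≤ √(∑ i, u i ^ 2) := (pi_norm_le_iff_of_nonneg (Real.sqrt_nonneg _)).2 fun i =>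
    Real.abs_le_sqrt (Finset.single_le_sum (fun j _ => sq_nonneg (u j)) (Finset.mem_univ i))
  calc ‖u‖ ^ 2 ≤ √(∑ i, u i ^ 2) ^ 2 := pow_le_pow_left₀ (norm_nonneg _) this 2
    _ = ∑ i, u i ^ 2 := Real.sq_sqrt hsum

theorem ae_tendsto_of_kronMean_eigenvalues_lt_one {Ω Γ ι : Type*} [MeasurableSpace Ω]
    {μ : Measure Ω} [Fintype Γ] [Nonempty Γ] [MeasurableSpace Γ] [MeasurableSingletonClass Γ]
    [Fintype ι] [DecidableEq ι] {σ : ℕ → Ω → Γ} (hindep : iIndepFun σ μ)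
    (hunif : ∀ k g, μ {ω | σ k ω = g} = (Fintype.card Γ : ℝ≥0∞)⁻¹) {M : Γ → Matrix ι ι ℝ}
    (hM : ∀ lam, HasEigen ((kronMean M).map Complex.ofReal) lam → ‖lam‖ < 1)
    {x : ℕ → Ω → ι → ℝ} {x₀ xstar : ι → ℝ} (hx₀ : ∀ ω, x 0 ω = x₀)
    (hx : ∀ k ω, x (k + 1) ω - xstar = M (σ k ω) *ᵥ (x k ω - xstar)) :
    ∀ᵐ ω ∂μ, Tendsto (fun k => x k ω) atTop (𝓝 xstar) := by
  set e₀ := x₀ - xstar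
  have herr (k : ℕ) (ω : Ω) : x k ω - xstar = orderedProd M k (fun j => σ j ω) *ᵥ e₀ := by
    rw [orderedProd_mulVec_of_succ M (fun j => σ j ω) (y := fun k => x k ω - xstar) (hx · ω) k,
      hx₀]
  refine ae_tendsto_of_forall_tsum_measure_le_dist_ne_top fun ε hε => ?_
  have hbound (k : ℕ) : μ {ω | ε ≤ dist (x k ω) xstar} ≤ ENNReal.ofReal
      (Fintype.card ι * ‖kronMean M ^ k *ᵥ kronVec e₀ e₀‖ / ε ^ 2) := by
    calc μ {ω | ε ≤ dist (x k ω) xstar}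
        ≤ μ {ω | ε ^ 2 ≤ ∑ i, (orderedProd M k (fun j => σ j ω) *ᵥ e₀) i ^ 2} := by
          refine measure_mono fun ω hω => ?_
          simp only [Set.mem_ofPred_eq, dist_eq_norm, herr] at hω ⊢
          exact (pow_le_pow_left₀ hε.le hω 2).trans (sq_norm_le_sum_sq _)
      _ ≤ ENNReal.ofReal ((∑ g : Fin k → Γ, ∑ i, (orderedProd M k g *ᵥ e₀) i ^ 2) /
            (ε ^ 2 * Fintype.card Γ ^ k)) :=
          measure_le_apply_prefix_le hindep hunif (fun g => Finset.sum_nonneg fun i _ =>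
            sq_nonneg _) (by positivity)
      _ ≤ _ := by
          refine ENNReal.ofReal_le_ofReal ?_
          rw [Finset.sum_comm]
          simp only [sum_sq_orderedProd_mulVec, ← Finset.mul_sum]
          rw [mul_comm (ε ^ 2), mul_div_mul_left _ _ (by positivity)]
          gcongr
          calc ∑ i, (kronMean M ^ k *ᵥ kronVec e₀ e₀) (i, i)
              ≤ ∑ _i : ι, ‖kronMean M ^ k *ᵥ kronVec e₀ e₀‖ := Finset.sum_le_sum fun i _ =>
                (Real.le_norm_self _).trans (norm_le_pi_norm _ (i, i))
            _ = _ := by simp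
  refine ne_top_of_le_ne_top ?_ (ENNReal.tsum_le_tsum hbound)
  exact (((summable_norm_pow_mulVec hM _).mul_left _).div_const _).tsum_ofReal_ne_top

section Splitting

variable {n m p s : ℕ} {H : Matrix (Fin n) (Fin n) ℝ} {A : Matrix (Fin m) (Fin n) ℝ} {β : ℝ}
  {σ : Fin n → Fin p}

theorem blockTriangular_Lmat :
    (Lmat H A β σ).BlockTriangular (OrderDual.toDual ∘ σ) := fun a b hab => by
  simp only [Lmat, of_apply, Function.comp_apply, OrderDual.toDual_lt_toDual] at hab ⊢
  rw [if_neg (not_le.2 hab)]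

theorem det_Lmat_pos (hA1 : Assumption1 H A β s) (hσ : IsUpdateOrder n p s σ) :
    0 < (Lmat H A β σ).det := by
  classical
  rw [blockTriangular_Lmat.det]
  refine Finset.prod_pos fun i _ => ?_
  let τ := Finset.univ.filter fun a => σ a = OrderDual.ofDual i
  let e : {a // (OrderDual.toDual ∘ σ) a = i} ≃ τ :=
    Equiv.subtypeEquivRight fun a => by
      simp only [τ, Finset.mem_filter, Finset.mem_univ, true_and, Function.comp_apply]
      exact OrderDual.toDual.eq_symm_apply.symm
  have hblock : (Lmat H A β σ).toSquareBlock (OrderDual.toDual ∘ σ) i =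
      ((Smat H A β).submatrix (fun x : τ => (x : Fin n)) (fun x : τ => (x : Fin n))).submatrix
        e e := by
    ext a b
    have : σ b ≤ σ a := by
      have ha := a.2; have hb := b.2
      simp only [Function.comp_apply] at ha hb
      rw [← OrderDual.toDual_le_toDual, hb, ha]
    simp [toSquareBlock_def, Lmat, this, e]
  rw [hblock, det_submatrix_equiv_self]
  exact (hA1 τ (hσ _)).det_pos

theorem isUnit_det_Lbar (hA1 : Assumption1 H A β s) (hσ : IsUpdateOrder n p s σ) :
    IsUnit (Lbar H A β σ).det := by
  rw [Lbar, det_fromBlocks_zero₁₂, det_one, mul_one]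
  exact (det_Lmat_pos hA1 hσ).ne'.isUnit

def kktMatrix (H : Matrix (Fin n) (Fin n) ℝ) (A : Matrix (Fin m) (Fin n) ℝ) (β : ℝ) :
    Matrix (Fin n ⊕ Fin m) (Fin n ⊕ Fin m) ℝ :=
  fromBlocks (Smat H A β) (-Aᵀ) (β • A) 0

theorem Lbar_sub_Rbar : Lbar H A β σ - Rbar H A β σ = kktMatrix H A β := by
  ext (i | i) (j | j) <;> simp [Lbar, Rbar, kktMatrix]

theorem isKKT_of_kktMatrix_mulVec {c : Fin n → ℝ} {b : Fin m → ℝ} (hβ : β ≠ 0)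
    {z : Fin n ⊕ Fin m → ℝ} (hz : kktMatrix H A β *ᵥ z = bbar c A b β) :
    IsKKT H c A b (fun i => z (Sum.inl i)) (fun j => z (Sum.inr j)) := by
  rw [kktMatrix, fromBlocks_mulVec, bbar, Sum.elim_eq_iff, zero_mulVec, add_zero,
    smul_mulVec, neg_mulVec, Smat, add_mulVec, smul_mulVec, ← mulVec_mulVec] at hz
  obtain ⟨hx, hAx⟩ := hz
  have hAx : A *ᵥ (z ∘ Sum.inl) = b := smul_right_injective _ hβ hAx
  rw [hAx] at hx
  refine ⟨?_, hAx⟩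
  funext i
  have := congrFun hx i
  simp only [Pi.add_apply, Pi.neg_apply, Pi.smul_apply, Function.comp_def] at this
  simp only [Pi.add_apply, Pi.sub_apply, Pi.zero_apply]
  linarith

theorem Mmat_mulVec_add_eq_self (hA1 : Assumption1 H A β s) (hσ : IsUpdateOrder n p s σ)
    {z d : Fin n ⊕ Fin m → ℝ} (hz : kktMatrix H A β *ᵥ z = d) :
    Mmat H A β σ *ᵥ z + (Lbar H A β σ)⁻¹ *ᵥ d = z :=
  inv_mul_mulVec_add_inv_mulVec_eq_self (isUnit_det_Lbar hA1 hσ) (Lbar_sub_Rbar ▸ hz)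

theorem isUnit_det_kktMatrix [Nonempty (UpdateOrder n p s)] (hA1 : Assumption1 H A β s)
    (hspec : ∀ lam : ℂ,
      HasEigen ((kronMean fun σ : UpdateOrder n p s => Mmat H A β σ.1).map Complex.ofReal) lam →
        ‖lam‖ < 1) :
    IsUnit (kktMatrix H A β).det := by
  rw [isUnit_iff_ne_zero]
  intro hdet
  obtain ⟨v, hv0, hv⟩ := exists_mulVec_eq_zero_iff.2 hdet
  have hfix (σ : UpdateOrder n p s) : Mmat H A β σ.1 *ᵥ v = v := by
    simpa using Mmat_mulVec_add_eq_self hA1 σ.2 hv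
  obtain ⟨i, hi⟩ := Function.ne_iff.1 hv0
  have heig : HasEigen ((kronMean fun σ : UpdateOrder n p s => Mmat H A β σ.1).map
      Complex.ofReal) 1 := by
    refine ⟨Complex.ofReal ∘ kronVec v v, fun h => hi ?_, ?_⟩
    · simpa [kronVec] using congrFun h (i, i)
    · funext q
      have := RingHom.map_mulVec Complex.ofRealHom
        (kronMean fun σ : UpdateOrder n p s => Mmat H A β σ.1) (kronVec v v) q
      rw [kronMean_mulVec_kronVec_of_forall_mulVec_eq hfix] at this
      rw [one_smul]
      exact this.symm
  simpa using hspec 1 heig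

end Splitting

end RAC

theorem almost_sure_convergence_of_RAC_MBADMM_general
    (n m p s : ℕ)
    (H : Matrix (Fin n) (Fin n) ℝ)
    (c : Fin n → ℝ) (A : Matrix (Fin m) (Fin n) ℝ) (b : Fin m → ℝ)
    (β : ℝ) (hβ : 0 < β)
    (hA1 : Assumption1 H A β s)
    (hspec : ∀ lam : ℂ,
      HasEigen
        ((((Fintype.card (UpdateOrder n p s) : ℝ)⁻¹ •
            ∑ σ : UpdateOrder n p s,
              (Mmat H A β σ.1) ⊗ₖ (Mmat H A β σ.1)).map Complex.ofReal)) lam →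
      ‖lam‖ < 1)
    (Ω : Type*) [MeasurableSpace Ω] (μ : Measure Ω) [IsProbabilityMeasure μ]
    (σ : ℕ → Ω → UpdateOrder n p s)
    (hindep : iIndepFun σ μ)
    (hunif : ∀ k (g : UpdateOrder n p s),
      μ {ω | σ k ω = g} = (Fintype.card (UpdateOrder n p s) : ℝ≥0∞)⁻¹)
    (z0 : Fin n ⊕ Fin m → ℝ)
    (z : ℕ → Ω → Fin n ⊕ Fin m → ℝ)
    (hz0 : ∀ ω, z 0 ω = z0)
    (hz : ∀ k ω, z (k + 1) ω =
      Mmat H A β (σ k ω).1 *ᵥ z k ω + (Lbar H A β (σ k ω).1)⁻¹ *ᵥ bbar c A b β) :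
    ∃ zstar : Fin n ⊕ Fin m → ℝ,
      IsKKT H c A b (fun i => zstar (Sum.inl i)) (fun j => zstar (Sum.inr j)) ∧
      ∀ᵐ ω ∂μ, Tendsto (fun k => z k ω) atTop (𝓝 zstar) := by
  have : Nonempty (UpdateOrder n p s) := ⟨σ 0 (nonempty_of_isProbabilityMeasure μ).some⟩
  have hK := isUnit_det_kktMatrix hA1 hspec
  set zstar := (kktMatrix H A β)⁻¹ *ᵥ bbar c A b β
  have hKz : kktMatrix H A β *ᵥ zstar = bbar c A b β := by
    rw [mulVec_mulVec, mul_nonsing_inv _ hK, one_mulVec]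
  refine ⟨zstar, isKKT_of_kktMatrix_mulVec hβ.ne' hKz, ?_⟩
  refine ae_tendsto_of_kronMean_eigenvalues_lt_one hindep hunif hspec hz0 fun k ω => ?_
  conv_lhs => rw [hz, ← Mmat_mulVec_add_eq_self hA1 (σ k ω).2 hKz]
  rw [mulVec_sub]
  abel

/-- Under Assumption 1, if the spectral radius of
`|Γ|⁻¹ Σ_{σ∈Γ} M_σ ⊗ M_σ` is strictly less than 1 (i.e. every complex eigenvalue has
modulus < 1), then the RAC-MBADMM iterates converge almost surely to a KKT point. -/
theorem almost_sure_convergence_of_RAC_MBADMM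
    (n m p s : ℕ) (hp : 0 < p) (hs : 0 < s) (hn : n = p * s)
    (H : Matrix (Fin n) (Fin n) ℝ) (hH : H.PosSemidef)
    (c : Fin n → ℝ) (A : Matrix (Fin m) (Fin n) ℝ) (b : Fin m → ℝ)
    (β : ℝ) (hβ : 0 < β)
    (hA1 : Assumption1 H A β s)
    (hspec : ∀ lam : ℂ,
      HasEigen
        ((((Fintype.card (UpdateOrder n p s) : ℝ)⁻¹ •
            ∑ σ : UpdateOrder n p s,
              (Mmat H A β σ.1) ⊗ₖ (Mmat H A β σ.1)).map Complex.ofReal)) lam →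
      ‖lam‖ < 1)
    (Ω : Type*) [MeasurableSpace Ω] (μ : Measure Ω) [IsProbabilityMeasure μ]
    (σ : ℕ → Ω → UpdateOrder n p s)
    (hmeas : ∀ k, Measurable (σ k))
    (hindep : iIndepFun σ μ)
    (hunif : ∀ k (g : UpdateOrder n p s),
      μ {ω | σ k ω = g} = (Fintype.card (UpdateOrder n p s) : ℝ≥0∞)⁻¹)
    (z0 : Fin n ⊕ Fin m → ℝ)
    (z : ℕ → Ω → Fin n ⊕ Fin m → ℝ)
    (hz0 : ∀ ω, z 0 ω = z0)
    (hz : ∀ k ω, z (k + 1) ω =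
      Mmat H A β (σ k ω).1 *ᵥ z k ω + (Lbar H A β (σ k ω).1)⁻¹ *ᵥ bbar c A b β) :
    ∃ zstar : Fin n ⊕ Fin m → ℝ,
      IsKKT H c A b (fun i => zstar (Sum.inl i)) (fun j => zstar (Sum.inr j)) ∧
      ∀ᵐ ω ∂μ, Tendsto (fun k => z k ω) atTop (𝓝 zstar) :=
  almost_sure_convergence_of_RAC_MBADMM_general n m p s H c A b β hβ hA1 hspec Ω μ σ hindep hunif z0
    z hz0 hz
end

section
/- Suppose Assumption 1 holds and that every eigenvalue of QS is real and lies in [0, 4/3). Then every complex eigenvalue λ of the expected mapping matrix M satisfies |λ| < 1 or λ = 1. -/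
open Matrix Filter Topology MeasureTheory ProbabilityTheory Kronecker

open RAC Matrix

/-!
`Q` is symmetric, since reversing an update order transposes `L_σ`, and positive definite:
`L_σ + L_σᵀ = S + D_σ` with `D_σ` the block diagonal of `S`, positive definite by Assumption 1,
so `xᵀ L_σ⁻¹ x = yᵀ L_σ y > 0` for `y = L_σ⁻¹ x`. Conjugating by `Q^{1/2}` turns the spectral
hypothesis on `QS` into `S < (4/3) Q⁻¹`. An eigenvector `(x, y)` of `M` for `λ ≠ 1` satisfies
`Q (S x - Aᵀ y) = (1 - λ) x` and `λ β A x = (1 - λ) y`, hence `x ≠ 0`, and the Rayleigh quotients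
`q = x* Q⁻¹ x`, `a = x* S x`, `h = x* H x` obey `(1 - λ)² q = (1 - 2λ) a + λ h` with
`0 ≤ h ≤ a < 4q/3`; every root `λ ≠ 1` of this quadratic lies in the open unit disc.
-/

namespace RAC

open scoped ComplexOrder

section BlockParts

variable {ι κ : Type*} [LinearOrder κ] (M : Matrix ι ι ℝ) (σ : ι → κ)

def blockLowerPart : Matrix ι ι ℝ :=
  Matrix.of fun a b => if σ b ≤ σ a then M a b else 0

def blockDiagPart : Matrix ι ι ℝ :=
  Matrix.of fun a b => if σ a = σ b then M a b else 0

def fiberRestrict (i : κ) (x : ι → ℝ) : ι → ℝ :=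
  fun a => if σ a = i then x a else 0

variable {M}

lemma blockLowerPart_add_transpose (hM : M.IsSymm) :
    blockLowerPart M σ + (blockLowerPart M σ)ᵀ = M + blockDiagPart M σ := by
  ext a b
  have hab : M b a = M a b := hM.apply a b
  simp only [Matrix.add_apply, transpose_apply, blockLowerPart, blockDiagPart, of_apply]
  rcases lt_trichotomy (σ a) (σ b) with h | h | h
  · simp [h.ne, h.not_ge, h.le, hab]
  · simp [h, hab]
  · simp [h.ne', h.not_ge, h.le]

lemma blockLowerPart_comp_eq_transpose {f : κ → κ} (hf : ∀ i j, f i ≤ f j ↔ j ≤ i) (hM : M.IsSymm) :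
    blockLowerPart M (f ∘ σ) = (blockLowerPart M σ)ᵀ := by
  ext a b
  simp [blockLowerPart, hf, hM.apply a b]

variable [Fintype ι]

lemma dotProduct_blockDiagPart_mulVec [Fintype κ] (x : ι → ℝ) :
    x ⬝ᵥ (blockDiagPart M σ *ᵥ x) =
      ∑ i : κ, fiberRestrict σ i x ⬝ᵥ (M *ᵥ fiberRestrict σ i x) := by
  simp only [dotProduct, mulVec, blockDiagPart, fiberRestrict, of_apply, Finset.mul_sum]
  conv_rhs => rw [Finset.sum_comm]; arg 2; ext a; rw [Finset.sum_comm]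
  refine Finset.sum_congr rfl fun a _ => Finset.sum_congr rfl fun b _ => ?_
  by_cases h : σ a = σ b <;> simp [h, ite_mul, mul_ite, eq_comm]

lemma dotProduct_blockDiagPart_mulVec_pos [Fintype κ]
    (hfib : ∀ i x, fiberRestrict σ i x ≠ 0 →
      0 < fiberRestrict σ i x ⬝ᵥ (M *ᵥ fiberRestrict σ i x))
    {x : ι → ℝ} (hx : x ≠ 0) : 0 < x ⬝ᵥ (blockDiagPart M σ *ᵥ x) := by
  obtain ⟨a, ha⟩ := Function.ne_iff.mp hx
  have hterm : ∀ i, 0 ≤ fiberRestrict σ i x ⬝ᵥ (M *ᵥ fiberRestrict σ i x) := fun i => by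
    by_cases h : fiberRestrict σ i x = 0
    · simp [h]
    · exact (hfib i x h).le
  have hσa : fiberRestrict σ (σ a) x ≠ 0 :=
    Function.ne_iff.mpr ⟨a, by simpa [fiberRestrict] using ha⟩
  rw [dotProduct_blockDiagPart_mulVec]
  exact Finset.sum_pos' (fun i _ => hterm i) ⟨σ a, Finset.mem_univ _, hfib _ _ hσa⟩

lemma dotProduct_blockLowerPart_mulVec_pos [Fintype κ] (hM : M.PosSemidef)
    (hfib : ∀ i x, fiberRestrict σ i x ≠ 0 →
      0 < fiberRestrict σ i x ⬝ᵥ (M *ᵥ fiberRestrict σ i x))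
    {x : ι → ℝ} (hx : x ≠ 0) : 0 < x ⬝ᵥ (blockLowerPart M σ *ᵥ x) := by
  set L := blockLowerPart M σ
  have htwice : 2 * (x ⬝ᵥ (L *ᵥ x)) = x ⬝ᵥ (M *ᵥ x) + x ⬝ᵥ (blockDiagPart M σ *ᵥ x) := by
    have hLt : x ⬝ᵥ (Lᵀ *ᵥ x) = x ⬝ᵥ (L *ᵥ x) := by
      rw [mulVec_transpose, dotProduct_comm, ← dotProduct_mulVec]
    rw [← dotProduct_add, ← add_mulVec,
      ← blockLowerPart_add_transpose σ (isHermitian_iff_isSymm.mp hM.isHermitian),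
      add_mulVec, dotProduct_add, hLt, two_mul]
  have hMx : 0 ≤ x ⬝ᵥ (M *ᵥ x) := by simpa using hM.dotProduct_mulVec_nonneg x
  linarith [dotProduct_blockDiagPart_mulVec_pos σ hfib hx]

end BlockParts

section QuadraticForms

variable {ι : Type*} [Fintype ι]

lemma dotProduct_mulVec_eq_submatrix (M : Matrix ι ι ℝ) (τ : Finset ι)
    {x : ι → ℝ} (hx : ∀ a ∉ τ, x a = 0) :
    x ⬝ᵥ (M *ᵥ x) = (fun a : τ => x a) ⬝ᵥ (M.submatrix (↑) (↑) *ᵥ fun a : τ => x a) := by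
  have hsum : ∀ f : ι → ℝ, (∀ a ∉ τ, f a = 0) → ∑ a, f a = ∑ a : τ, f a := fun f hf => by
    rw [Finset.sum_coe_sort, Finset.sum_subset (Finset.subset_univ τ) fun a _ ha => hf a ha]
  simp only [dotProduct, mulVec, submatrix_apply]
  rw [hsum _ fun a ha => by simp [hx a ha]]
  exact Finset.sum_congr rfl fun a _ => congrArg _ (hsum _ fun b hb => by simp [hx b hb])

variable [DecidableEq ι] {L : Matrix ι ι ℝ}

lemma isUnit_of_dotProduct_mulVec_pos (hL : ∀ x, x ≠ 0 → 0 < x ⬝ᵥ (L *ᵥ x)) : IsUnit L := by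
  refine mulVec_injective_iff_isUnit.mp fun x y hxy => ?_
  by_contra hne
  have h := hL (x - y) (sub_ne_zero.mpr hne)
  rw [mulVec_sub, hxy, sub_self, dotProduct_zero] at h
  exact h.false

lemma dotProduct_inv_mulVec_pos (hL : ∀ x, x ≠ 0 → 0 < x ⬝ᵥ (L *ᵥ x)) {x : ι → ℝ} (hx : x ≠ 0) :
    0 < x ⬝ᵥ (L⁻¹ *ᵥ x) := by
  have hLy : L *ᵥ (L⁻¹ *ᵥ x) = x := by
    rw [mulVec_mulVec, mul_nonsing_inv _ ((isUnit_iff_isUnit_det L).mp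
      (isUnit_of_dotProduct_mulVec_pos hL)), one_mulVec]
  have hy : L⁻¹ *ᵥ x ≠ 0 := fun h => hx (by rw [← hLy, h, mulVec_zero])
  simpa only [hLy, dotProduct_comm] using hL _ hy

end QuadraticForms

section UpdateOrders

variable {n m p s : ℕ} {H : Matrix (Fin n) (Fin n) ℝ} {A : Matrix (Fin m) (Fin n) ℝ} {β : ℝ}

lemma Smat_isSymm (hH : H.IsSymm) : (Smat H A β).IsSymm :=
  hH.add (IsSymm.smul (by rw [IsSymm, transpose_mul, transpose_transpose]) β)

lemma Smat_posSemidef (hH : H.PosSemidef) (hβ : 0 ≤ β) : (Smat H A β).PosSemidef := by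
  simpa [Smat] using hH.add ((posSemidef_conjTranspose_mul_self A).smul hβ)

lemma Assumption1.dotProduct_fiberRestrict_mulVec_pos (hA1 : Assumption1 H A β s)
    {σ : Fin n → Fin p} (hσ : IsUpdateOrder n p s σ) (i : Fin p) (x : Fin n → ℝ)
    (hx : fiberRestrict σ i x ≠ 0) :
    0 < fiberRestrict σ i x ⬝ᵥ (Smat H A β *ᵥ fiberRestrict σ i x) := by
  set τ := Finset.univ.filter fun a => σ a = i
  have hsupp : ∀ a ∉ τ, fiberRestrict σ i x a = 0 := fun a ha => by
    simp_all [τ, fiberRestrict]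
  obtain ⟨a, ha⟩ := Function.ne_iff.mp hx
  have hne : (fun b : τ => fiberRestrict σ i x b) ≠ 0 := Function.ne_iff.mpr
    ⟨⟨a, by_contra fun h => ha (hsupp a h)⟩, ha⟩
  rw [dotProduct_mulVec_eq_submatrix _ τ hsupp]
  simpa using (hA1 τ (hσ i)).dotProduct_mulVec_pos hne

lemma Lmat_eq_blockLowerPart (σ : Fin n → Fin p) : Lmat H A β σ = blockLowerPart (Smat H A β) σ :=
  rfl

lemma dotProduct_Lmat_mulVec_pos (hH : H.PosSemidef) (hβ : 0 ≤ β) (hA1 : Assumption1 H A β s)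
    {σ : Fin n → Fin p} (hσ : IsUpdateOrder n p s σ) {x : Fin n → ℝ} (hx : x ≠ 0) :
    0 < x ⬝ᵥ (Lmat H A β σ *ᵥ x) := by
  rw [Lmat_eq_blockLowerPart]
  exact dotProduct_blockLowerPart_mulVec_pos σ (Smat_posSemidef hH hβ)
    (Assumption1.dotProduct_fiberRestrict_mulVec_pos hA1 hσ) hx

lemma Lmat_rev (hH : H.IsSymm) (σ : Fin n → Fin p) :
    Lmat H A β (Fin.rev ∘ σ) = (Lmat H A β σ)ᵀ := by
  simp only [Lmat_eq_blockLowerPart]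
  exact blockLowerPart_comp_eq_transpose σ (fun _ _ => Fin.rev_le_rev) (Smat_isSymm hH)

lemma isUpdateOrder_rev {σ : Fin n → Fin p} (hσ : IsUpdateOrder n p s σ) :
    IsUpdateOrder n p s (Fin.rev ∘ σ) := fun i => by
  simpa only [Function.comp_apply, Fin.rev_eq_iff] using hσ (Fin.rev i)

def UpdateOrder.rev : Equiv.Perm (UpdateOrder n p s) :=
  Function.Involutive.toPerm (fun σ => ⟨Fin.rev ∘ σ.1, isUpdateOrder_rev σ.2⟩)
    fun σ => Subtype.ext (funext fun a => Fin.rev_rev (σ.1 a))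

lemma Qmat_isSymm (hH : H.IsSymm) : (Qmat n m p s H A β).IsSymm := by
  rw [IsSymm, Qmat, transpose_smul, transpose_sum]
  congr 1
  refine Fintype.sum_equiv UpdateOrder.rev _ _ fun σ => ?_
  rw [transpose_nonsing_inv, ← Lmat_rev hH]
  rfl

lemma dotProduct_Qmat_mulVec_pos [Nonempty (UpdateOrder n p s)] (hH : H.PosSemidef) (hβ : 0 ≤ β)
    (hA1 : Assumption1 H A β s) {x : Fin n → ℝ} (hx : x ≠ 0) :
    0 < x ⬝ᵥ (Qmat n m p s H A β *ᵥ x) := by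
  simp only [Qmat, smul_mulVec, dotProduct_smul, sum_mulVec, dotProduct_sum, smul_eq_mul]
  exact mul_pos (inv_pos.mpr (Nat.cast_pos.mpr Fintype.card_pos)) <| Finset.sum_pos
    (fun σ _ => dotProduct_inv_mulVec_pos (fun _ => dotProduct_Lmat_mulVec_pos hH hβ hA1 σ.2) hx)
    Finset.univ_nonempty

lemma Qmat_posDef [Nonempty (UpdateOrder n p s)] (hH : H.PosSemidef) (hβ : 0 ≤ β)
    (hA1 : Assumption1 H A β s) : (Qmat n m p s H A β).PosDef :=
  .of_dotProduct_mulVec_pos (isHermitian_iff_isSymm.mpr (Qmat_isSymm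
    (isHermitian_iff_isSymm.mp hH.isHermitian))) fun x hx => by
      simpa using dotProduct_Qmat_mulVec_pos hH hβ hA1 hx

end UpdateOrders

section Complexification

variable {ι : Type*} [Fintype ι] [DecidableEq ι]

open scoped MatrixOrder in
lemma posSemidef_map_ofReal {M : Matrix ι ι ℝ} (hM : M.PosSemidef) :
    (M.map Complex.ofReal).PosSemidef := by
  obtain ⟨B, rfl⟩ := CStarAlgebra.nonneg_iff_eq_star_mul_self.mp hM.nonneg
  have hmap : (star B * B).map Complex.ofReal = (B.map Complex.ofReal)ᴴ * B.map Complex.ofReal := by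
    ext i j
    simp [mul_apply]
  simpa [hmap] using posSemidef_conjTranspose_mul_self (B.map Complex.ofReal)

lemma posDef_map_ofReal {M : Matrix ι ι ℝ} (hM : M.PosDef) : (M.map Complex.ofReal).PosDef := by
  refine (posSemidef_map_ofReal hM.posSemidef).posDef_iff_det_ne_zero.mpr ?_
  rw [show M.map Complex.ofReal = Complex.ofRealHom.mapMatrix M from rfl, ← RingHom.map_det]
  simpa using hM.det_pos.ne'

end Complexification

section Spectral

variable {ι : Type*} [Fintype ι] [DecidableEq ι]

lemma posDef_smul_one_sub_of_eigenvalues_lt {𝕜 : Type*} [RCLike 𝕜] {K : Matrix ι ι 𝕜}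
    (hK : K.IsHermitian) {c : ℝ} (hc : ∀ i, hK.eigenvalues i < c) :
    ((c : 𝕜) • (1 : Matrix ι ι 𝕜) - K).PosDef := by
  have hdiag : (c : 𝕜) • (1 : Matrix ι ι 𝕜) - diagonal (RCLike.ofReal ∘ hK.eigenvalues) =
      diagonal (RCLike.ofReal ∘ fun i => c - hK.eigenvalues i) := by
    rw [smul_one_eq_diagonal, diagonal_sub]
    simp [Function.comp_def]
  rw [hK.spectral_theorem, ← map_one (Unitary.conjStarAlgAut 𝕜 _ hK.eigenvectorUnitary), ← map_smul,
    ← map_sub, hdiag]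
  simpa [Unitary.isUnit_coe.posDef_star_right_conjugate_iff] using hc

open scoped MatrixOrder in
lemma posDef_smul_inv_sub_of_hasEigen {Q S : Matrix ι ι ℂ} (hQ : Q.PosDef) (hS : S.IsHermitian)
    {c : ℝ} (hQS : ∀ μ, HasEigen (Q * S) μ → μ.re < c) : ((c : ℂ) • Q⁻¹ - S).PosDef := by
  set R := CFC.sqrt Q
  have hR : R.PosDef := hQ.isStrictlyPositive.sqrt.posDef
  have hRR : R * R = Q := CFC.sqrt_mul_sqrt_self Q hQ.posSemidef.nonneg
  have hRH : Rᴴ = R := hR.isHermitian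
  have hK : (R * S * R).IsHermitian := by
    simpa [hRH] using isHermitian_conjTranspose_mul_mul R hS
  have hRinv : R⁻¹ * R = 1 := nonsing_inv_mul R ((isUnit_iff_isUnit_det R).mp hR.isUnit)
  have hRinv' : R * R⁻¹ = 1 := mul_nonsing_inv R ((isUnit_iff_isUnit_det R).mp hR.isUnit)
  -- an eigenvector `v` of `R S R` yields the eigenvector `R v` of `Q S = R (R S R) R⁻¹`
  have heig : ∀ i, hK.eigenvalues i < c := fun i => by
    set v := ⇑(hK.eigenvectorBasis i)
    have hv : v ≠ 0 := fun h => hK.eigenvectorBasis.orthonormal.ne_zero i (by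
      ext j; exact congrFun h j)
    have hRv : R *ᵥ v ≠ 0 := fun h => hv (by
      rw [← one_mulVec v, ← hRinv, ← mulVec_mulVec, h, mulVec_zero])
    have hQSRv : (Q * S) *ᵥ (R *ᵥ v) = (hK.eigenvalues i : ℂ) • (R *ᵥ v) := by
      rw [← hRR, mulVec_mulVec,
        show R * R * S * R = R * (R * S * R) by simp only [Matrix.mul_assoc], ← mulVec_mulVec,
        hK.mulVec_eigenvectorBasis, mulVec_smul]
      rfl
    simpa using hQS _ ⟨R *ᵥ v, hRv, hQSRv⟩
  have hKc := posDef_smul_one_sub_of_eigenvalues_lt hK heig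
  have hconj : (c : ℂ) • Q⁻¹ - S = star R⁻¹ * ((c : ℂ) • 1 - R * S * R) * R⁻¹ := by
    rw [star_eq_conjTranspose, conjTranspose_nonsing_inv, hRH, ← hRR, Matrix.mul_inv_rev]
    simp only [Matrix.mul_sub, Matrix.sub_mul, Matrix.mul_smul, Matrix.smul_mul, Matrix.mul_one,
      ← Matrix.mul_assoc, hRinv, Matrix.one_mul]
    simp only [Matrix.mul_assoc, hRinv', Matrix.mul_one]
  rw [hconj]
  exact (IsUnit.posDef_star_left_conjugate_iff (isUnit_nonsing_inv_iff.mpr hR.isUnit)).mpr hKc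

end Spectral

section Quadratic

variable {q a h X Y : ℝ}

lemma sq_lt_one_of_real_root (hh : 0 ≤ h) (hha : h ≤ a) (haq : 3 * a < 4 * q) (hX : X ≠ 1)
    (heq : q * (1 - X) ^ 2 = (1 - 2 * X) * a + X * h) : X ^ 2 < 1 := by
  rcases lt_or_gt_of_ne hX with hX1 | hX1
  · have hX2 : -1 < X := by
      by_contra! hX2
      nlinarith [mul_pos (by linarith : 0 < q - 3 / 4 * a) (by nlinarith : 0 < (1 - X) ^ 2),
        mul_nonneg (by linarith : 0 ≤ a)
          (mul_nonneg_of_nonpos_of_nonpos (by linarith : 3 * X - 1 ≤ 0) (by linarith : X + 1 ≤ 0)),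
        mul_nonpos_of_nonpos_of_nonneg (by linarith : X ≤ 0) hh]
    nlinarith
  · nlinarith [mul_pos (sub_pos.2 hX1) (sub_pos.2 hX1)]

lemma sq_add_sq_lt_one_of_nonreal_root (hh : 0 ≤ h) (hha : h ≤ a) (haq : 3 * a < 4 * q)
    (hY : Y ≠ 0) (hre : q * ((1 - X) ^ 2 - Y ^ 2) = (1 - 2 * X) * a + X * h)
    (him : 2 * q * (1 - X) = 2 * a - h) : X ^ 2 + Y ^ 2 < 1 := by
  have hq : 0 < q := by linarith
  have hsum : q * (X ^ 2 + Y ^ 2) = q - a := by nlinarith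
  have ha : 0 < a := by
    by_contra! ha
    have hX1 : X = 1 := by nlinarith
    nlinarith [sq_pos_of_ne_zero hY]
  nlinarith

end Quadratic

lemma norm_lt_one_of_quadratic {q a h z : ℂ} (hh : 0 ≤ h) (hha : h ≤ a) (haq : a < 4 / 3 * q)
    (hz : z ≠ 1) (heq : (1 - z) ^ 2 * q = (1 - 2 * z) * a + z * h) : ‖z‖ < 1 := by
  obtain ⟨hh0, hhim⟩ := Complex.le_def.mp hh
  obtain ⟨hha, haim⟩ := Complex.le_def.mp hha
  obtain ⟨haq, hqim⟩ := Complex.lt_def.mp haq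
  simp only [Complex.zero_re, Complex.zero_im] at hh0 hhim
  replace haim : a.im = 0 := by rw [← haim, hhim]
  replace hqim : q.im = 0 := by simpa [haim] using hqim
  replace haq : 3 * a.re < 4 * q.re := by
    simp only [Complex.mul_re, Complex.div_ofNat_re, Complex.re_ofNat, Complex.div_ofNat_im,
      Complex.im_ofNat, zero_div, zero_mul, sub_zero] at haq
    linarith
  have hre : q.re * ((1 - z.re) ^ 2 - z.im ^ 2) = (1 - 2 * z.re) * a.re + z.re * h.re := by
    have := congrArg Complex.re heq
    simp only [pow_two, Complex.mul_re, Complex.sub_re, Complex.one_re, Complex.sub_im,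
      Complex.one_im, zero_sub, mul_neg, neg_mul, neg_neg, Complex.mul_im, hqim, mul_zero, sub_zero,
      Complex.add_re, Complex.re_ofNat, Complex.im_ofNat, zero_mul, add_zero, haim, ← hhim] at this
    linear_combination this
  have him : z.im * (2 * q.re * (1 - z.re) - 2 * a.re + h.re) = 0 := by
    have := congrArg Complex.im heq
    simp only [pow_two, Complex.mul_im, Complex.mul_re, Complex.sub_re, Complex.one_re,
      Complex.sub_im, Complex.one_im, zero_sub, mul_neg, neg_mul, neg_neg, hqim, mul_zero, zero_add,
      Complex.add_im, Complex.re_ofNat, Complex.im_ofNat, zero_mul, sub_zero, haim, add_zero,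
      ← hhim] at this
    linear_combination -this
  have hnorm : ‖z‖ ^ 2 = z.re ^ 2 + z.im ^ 2 := by
    rw [Complex.sq_norm, Complex.normSq_apply]
    ring
  suffices z.re ^ 2 + z.im ^ 2 < 1 by nlinarith [norm_nonneg z]
  rcases eq_or_ne z.im 0 with hY | hY
  · rw [hY] at hre ⊢
    have hX : z.re ≠ 1 := fun hX => hz (Complex.ext hX hY)
    simpa using sq_lt_one_of_real_root hh0 hha haq hX (by linear_combination hre)
  · exact sq_add_sq_lt_one_of_nonreal_root hh0 hha haq hY hre
      (by linarith [(mul_eq_zero.mp him).resolve_left hY])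

section Mapping

variable {ι κ : Type*} [Fintype ι] [Fintype κ] [DecidableEq ι] [DecidableEq κ]

def blockMapping (Q S : Matrix ι ι ℂ) (A : Matrix κ ι ℂ) (β : ℝ) : Matrix (ι ⊕ κ) (ι ⊕ κ) ℂ :=
  fromBlocks (1 - Q * S) (Q * Aᴴ) (-((β : ℂ) • A) + (β : ℂ) • (A * (Q * S)))
    (1 - (β : ℂ) • (A * (Q * Aᴴ)))

variable {Q S : Matrix ι ι ℂ} {A : Matrix κ ι ℂ} {β : ℝ} {z : ℂ}

lemma exists_of_hasEigen_blockMapping (h : HasEigen (blockMapping Q S A β) z) (hz : z ≠ 1) :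
    ∃ x y, x ≠ 0 ∧ Q *ᵥ (S *ᵥ x - Aᴴ *ᵥ y) = (1 - z) • x ∧ (z * β) • (A *ᵥ x) = (1 - z) • y := by
  obtain ⟨v, hv0, hv⟩ := h
  rw [blockMapping, fromBlocks_mulVec] at hv
  have e1 := congrArg (· ∘ Sum.inl) hv
  have e2 := congrArg (· ∘ Sum.inr) hv
  set x := v ∘ Sum.inl
  set y := v ∘ Sum.inr
  simp only [Sum.elim_comp_inl, Sum.elim_comp_inr, Pi.smul_comp, sub_mulVec, add_mulVec, neg_mulVec,
    one_mulVec, smul_mulVec, ← mulVec_mulVec] at e1 e2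
  have e1' : Q *ᵥ (S *ᵥ x - Aᴴ *ᵥ y) = (1 - z) • x := by
    rw [mulVec_sub]
    linear_combination (norm := module) -e1
  have e2' : (z * β) • (A *ᵥ x) = (1 - z) • y := by
    have hA := congrArg (A *ᵥ ·) e1'
    simp only [mulVec_sub, mulVec_smul] at hA
    linear_combination (norm := module) -e2 + (β : ℂ) • hA
  refine ⟨x, y, fun hx => hv0 ?_, e1', e2'⟩
  have hy : y = 0 := by
    rw [hx, mulVec_zero, smul_zero] at e2'
    exact (smul_eq_zero.mp e2'.symm).resolve_left (sub_ne_zero.mpr hz.symm)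
  exact funext fun | .inl i => congrFun hx i | .inr i => congrFun hy i

lemma eq_one_of_hasEigen_blockMapping_zero (h : HasEigen (blockMapping 0 S A β) z) : z = 1 := by
  by_contra hz
  obtain ⟨x, y, hx, e1, -⟩ := exists_of_hasEigen_blockMapping h hz
  rw [zero_mulVec, eq_comm, smul_eq_zero] at e1
  exact e1.elim (fun h1 => hz (sub_eq_zero.mp h1).symm) hx

lemma norm_lt_one_of_hasEigen_blockMapping {H : Matrix ι ι ℂ} (hβ : 0 ≤ β) (hQ : Q.PosDef)
    (hH : H.PosSemidef) (hbound : (((4 / 3 : ℝ) : ℂ) • Q⁻¹ - (H + (β : ℂ) • (Aᴴ * A))).PosDef)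
    (hzM : HasEigen (blockMapping Q (H + (β : ℂ) • (Aᴴ * A)) A β) z) (hz : z ≠ 1) : ‖z‖ < 1 := by
  obtain ⟨x, y, hx, e1, e2⟩ := exists_of_hasEigen_blockMapping hzM hz
  set S := H + (β : ℂ) • (Aᴴ * A)
  have e1' : S *ᵥ x - Aᴴ *ᵥ y = (1 - z) • (Q⁻¹ *ᵥ x) := by
    rw [← mulVec_smul, ← e1, mulVec_mulVec,
      nonsing_inv_mul _ ((isUnit_iff_isUnit_det Q).mp hQ.isUnit), one_mulVec]
  have ha : star x ⬝ᵥ (S *ᵥ x) = star x ⬝ᵥ (H *ᵥ x) + β * (star (A *ᵥ x) ⬝ᵥ (A *ᵥ x)) := by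
    rw [add_mulVec, dotProduct_add, smul_mulVec, dotProduct_smul, ← mulVec_mulVec,
      dotProduct_mulVec (star x) Aᴴ, ← star_mulVec, smul_eq_mul]
  have h1 : star x ⬝ᵥ (S *ᵥ x) - star (A *ᵥ x) ⬝ᵥ y = (1 - z) * (star x ⬝ᵥ (Q⁻¹ *ᵥ x)) := by
    have := congrArg (star x ⬝ᵥ ·) e1'
    rwa [dotProduct_sub, dotProduct_smul, dotProduct_mulVec (star x) Aᴴ, ← star_mulVec,
      smul_eq_mul] at this
  have h2 : z * β * (star (A *ᵥ x) ⬝ᵥ (A *ᵥ x)) = (1 - z) * (star (A *ᵥ x) ⬝ᵥ y) := by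
    have := congrArg (star (A *ᵥ x) ⬝ᵥ ·) e2
    rwa [dotProduct_smul, dotProduct_smul, smul_eq_mul, smul_eq_mul] at this
  have hxS := hbound.dotProduct_mulVec_pos hx
  rw [sub_mulVec, dotProduct_sub, smul_mulVec, dotProduct_smul, sub_pos] at hxS
  refine norm_lt_one_of_quadratic (hH.dotProduct_mulVec_nonneg x) ?_ (by simpa using hxS) hz
    (by linear_combination -(1 - z) * h1 + h2 + z * ha)
  rw [ha]
  exact le_add_of_nonneg_right (mul_nonneg (by exact_mod_cast hβ) (dotProduct_star_self_nonneg _))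

end Mapping

section Complexified

variable {n m p s : ℕ} {H : Matrix (Fin n) (Fin n) ℝ} {A : Matrix (Fin m) (Fin n) ℝ} {β : ℝ}

lemma posDef_smul_inv_Qmat_sub_Smat [Nonempty (UpdateOrder n p s)] (hH : H.PosSemidef)
    (hβ : 0 ≤ β) (hA1 : Assumption1 H A β s) {c : ℝ}
    (hQS : ∀ μ, HasEigen ((Qmat n m p s H A β * Smat H A β).map Complex.ofReal) μ → μ.re < c) :
    ((c : ℂ) • ((Qmat n m p s H A β).map Complex.ofReal)⁻¹ -
      (Smat H A β).map Complex.ofReal).PosDef :=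
  posDef_smul_inv_sub_of_hasEigen (posDef_map_ofReal (Qmat_posDef hH hβ hA1))
    (posSemidef_map_ofReal (Smat_posSemidef hH hβ)).isHermitian fun μ hμ =>
      hQS μ (by convert hμ using 2; exact Matrix.map_mul (f := Complex.ofRealHom))

lemma Smat_map_ofReal :
    (Smat H A β).map Complex.ofReal =
      H.map Complex.ofReal + (β : ℂ) • ((A.map Complex.ofReal)ᴴ * A.map Complex.ofReal) := by
  ext i j
  simp [Smat, mul_apply]

lemma Mexp_map_ofReal :
    (Mexp n m p s H A β).map Complex.ofReal =
      blockMapping ((Qmat n m p s H A β).map Complex.ofReal) ((Smat H A β).map Complex.ofReal)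
        (A.map Complex.ofReal) β := by
  ext (i | i) (j | j) <;> simp [Mexp, blockMapping, mul_apply, one_apply, apply_ite Complex.ofReal]

end Complexified

end RAC

theorem eig_Mexp_lt_one_or_eq_one_general
    (n m p s : ℕ)
    (H : Matrix (Fin n) (Fin n) ℝ) (hH : H.PosSemidef)
    (A : Matrix (Fin m) (Fin n) ℝ) (β : ℝ) (hβ : 0 < β)
    (hA1 : Assumption1 H A β s)
    (hQS : ∀ lam : ℂ,
      HasEigen (((Qmat n m p s H A β * Smat H A β).map Complex.ofReal)) lam →
      lam.im = 0 ∧ 0 ≤ lam.re ∧ lam.re < 4 / 3) :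
    ∀ lam : ℂ,
      HasEigen (((Mexp n m p s H A β).map Complex.ofReal)) lam →
      ‖lam‖ < 1 ∨ lam = 1 := by
  intro lam hlam
  rw [Mexp_map_ofReal] at hlam
  by_cases hlam1 : lam = 1
  · exact .inr hlam1
  refine .inl ?_
  cases isEmpty_or_nonempty (UpdateOrder n p s)
  · have hQ : Qmat n m p s H A β = 0 := by simp [Qmat]
    rw [hQ, Matrix.map_zero _ Complex.ofReal_zero] at hlam
    exact absurd (eq_one_of_hasEigen_blockMapping_zero hlam) hlam1
  have hbound := posDef_smul_inv_Qmat_sub_Smat hH hβ.le hA1 fun μ hμ => (hQS μ hμ).2.2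
  rw [Smat_map_ofReal] at hlam hbound
  exact norm_lt_one_of_hasEigen_blockMapping hβ.le (posDef_map_ofReal (Qmat_posDef hH hβ.le hA1))
    (posSemidef_map_ofReal hH) hbound hlam hlam1

/-- Under Assumption 1, if every eigenvalue of `QS` is real and lies in
`[0, 4/3)`, then every complex eigenvalue `λ` of the expected mapping matrix `M`
satisfies `|λ| < 1` or `λ = 1`. -/
theorem eig_Mexp_lt_one_or_eq_one
    (n m p s : ℕ) (hp : 0 < p) (hs : 0 < s) (hn : n = p * s)
    (H : Matrix (Fin n) (Fin n) ℝ) (hH : H.PosSemidef)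
    (A : Matrix (Fin m) (Fin n) ℝ) (β : ℝ) (hβ : 0 < β)
    (hA1 : Assumption1 H A β s)
    (hQS : ∀ lam : ℂ,
      HasEigen (((Qmat n m p s H A β * Smat H A β).map Complex.ofReal)) lam →
      lam.im = 0 ∧ 0 ≤ lam.re ∧ lam.re < 4 / 3) :
    ∀ lam : ℂ,
      HasEigen (((Mexp n m p s H A β).map Complex.ofReal)) lam →
      ‖lam‖ < 1 ∨ lam = 1 :=
  eig_Mexp_lt_one_or_eq_one_general n m p s H hH A β hβ hA1 hQS
end
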